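/- Consider a BPVE with first moments m_n. If limsup_{n→∞} m_n < 1, then the BPVE dies out, i.e. p_e = 1. -/

import Mathlib

/-!
Choose `C` with `limsup m_n < C < 1`; then `m_n ≤ C` for `n ≥ N`. Termwise Bernoulli gives
`1 - Φ_n(z) ≤ m_n (1 - z)` on `[0, 1]`, so for the environment shifted by `N` the iterates satisfy
`1 - H_n(0) ≤ C ^ n → 0`. The first `N` moments may be infinite, so the first `N` generations are
handled by continuity instead: `H_N` is continuous on `[0, 1]` with `H_N(1) = 1`, and
`H_{N+n} = H_N ∘ H_n^{shifted}`.
-/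

open Filter ENNReal

/-- Probability generating function `Φ_n(z) := ∑_i ρ_n(i) z^i` of the `n`-th offspring
distribution of a branching process in varying environment (BPVE). -/
noncomputable def Phi (ρ : ℕ → ℕ → ℝ) (n : ℕ) (z : ℝ) : ℝ :=
  ∑' i : ℕ, ρ n i * z ^ i

/-- The iterated generating functions `H_0(z) := z`, `H_{n+1} := H_n ∘ Φ_n`;
`H_n(0)` is the probability of extinction by generation `n`, and the extinction
probability is `p_e = lim_n H_n(0)`. -/
noncomputable def Hseq (ρ : ℕ → ℕ → ℝ) : ℕ → ℝ → ℝ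
  | 0 => fun z => z
  | n + 1 => fun z => Hseq ρ n (Phi ρ n z)

/-- First moment `m_n := ∑_i i ρ_n(i) ∈ [0,∞]` of the `n`-th offspring distribution. -/
noncomputable def mom (ρ : ℕ → ℕ → ℝ) (n : ℕ) : ℝ≥0∞ :=
  ∑' i : ℕ, (i : ℝ≥0∞) * ENNReal.ofReal (ρ n i)

/-- Second moment `m_n⁽²⁾ := ∑_i i² ρ_n(i) ∈ [0,∞]` of the `n`-th offspring
distribution. -/
noncomputable def mom2 (ρ : ℕ → ℕ → ℝ) (n : ℕ) : ℝ≥0∞ :=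
  ∑' i : ℕ, (i : ℝ≥0∞) ^ 2 * ENNReal.ofReal (ρ n i)

open Set Topology

section GeneratingFunction

variable {ρ : ℕ → ℕ → ℝ} {n : ℕ}

lemma norm_mul_pow_le {a z : ℝ} (ha : 0 ≤ a) (hz : z ∈ Icc (0 : ℝ) 1) (i : ℕ) :
    ‖a * z ^ i‖ ≤ a := by
  rw [Real.norm_eq_abs, abs_of_nonneg (mul_nonneg ha (pow_nonneg hz.1 i))]
  exact mul_le_of_le_one_right ha (pow_le_one₀ hz.1 hz.2)

lemma summable_Phi (h0 : ∀ i, 0 ≤ ρ n i) (h1 : HasSum (ρ n) 1) {z : ℝ}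
    (hz : z ∈ Icc (0 : ℝ) 1) : Summable fun i => ρ n i * z ^ i :=
  h1.summable.of_norm_bounded fun i => norm_mul_pow_le (h0 i) hz i

lemma Phi_one (h1 : HasSum (ρ n) 1) : Phi ρ n 1 = 1 := by
  simp [Phi, h1.tsum_eq]

lemma mapsTo_Phi (h0 : ∀ i, 0 ≤ ρ n i) (h1 : HasSum (ρ n) 1) :
    MapsTo (Phi ρ n) (Icc 0 1) (Icc 0 1) := fun _ hz =>
  ⟨tsum_nonneg fun i => mul_nonneg (h0 i) (pow_nonneg hz.1 i),
    hasSum_le (fun i => (le_abs_self _).trans (norm_mul_pow_le (h0 i) hz i))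
      (summable_Phi h0 h1 hz).hasSum h1⟩

lemma continuousOn_Phi (h0 : ∀ i, 0 ≤ ρ n i) (h1 : HasSum (ρ n) 1) :
    ContinuousOn (Phi ρ n) (Icc 0 1) :=
  continuousOn_tsum (fun i => (continuous_const.mul (continuous_pow i)).continuousOn)
    h1.summable fun i _ hz => norm_mul_pow_le (h0 i) hz i

lemma hasSum_mul_of_mom_ne_top (h0 : ∀ i, 0 ≤ ρ n i) (hm : mom ρ n ≠ ∞) :
    HasSum (fun i : ℕ => (i : ℝ) * ρ n i) (mom ρ n).toReal := by
  have hmom : mom ρ n = ∑' i : ℕ, ENNReal.ofReal ((i : ℝ) * ρ n i) := by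
    simp only [mom, ENNReal.ofReal_mul (Nat.cast_nonneg _), ENNReal.ofReal_natCast]
  rw [hmom] at hm ⊢
  rw [ENNReal.tsum_toReal_eq fun _ => ENNReal.ofReal_ne_top]
  simpa only [ENNReal.toReal_ofReal (mul_nonneg (Nat.cast_nonneg _) (h0 _))]
    using ENNReal.hasSum_toReal hm

-- Termwise this is Bernoulli's inequality `1 - z ^ i ≤ i (1 - z)`.
lemma one_sub_Phi_le (h0 : ∀ i, 0 ≤ ρ n i) (h1 : HasSum (ρ n) 1) (hm : mom ρ n ≠ ∞)
    {z : ℝ} (hz : z ∈ Icc (0 : ℝ) 1) :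
    1 - Phi ρ n z ≤ (mom ρ n).toReal * (1 - z) := by
  refine hasSum_le (fun i => ?_) (h1.sub (summable_Phi h0 h1 hz).hasSum)
    ((hasSum_mul_of_mom_ne_top h0 hm).mul_right (1 - z))
  have hbern := one_add_mul_le_pow (a := z - 1) (by linarith [hz.1]) i
  rw [add_sub_cancel] at hbern
  nlinarith [h0 i]

end GeneratingFunction

section Iteration

variable {ρ : ℕ → ℕ → ℝ}

lemma Hseq_add (N n : ℕ) (z : ℝ) :
    Hseq ρ (N + n) z = Hseq ρ N (Hseq (fun k => ρ (N + k)) n z) := by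
  induction n generalizing z with
  | zero => rfl
  | succ n ih => exact ih (Phi ρ (N + n) z)

lemma Hseq_one (h1 : ∀ n, HasSum (ρ n) 1) (n : ℕ) : Hseq ρ n 1 = 1 := by
  induction n with
  | zero => rfl
  | succ n ih => simp only [Hseq, Phi_one (h1 n), ih]

lemma mapsTo_Hseq (h0 : ∀ n i, 0 ≤ ρ n i) (h1 : ∀ n, HasSum (ρ n) 1) (n : ℕ) :
    MapsTo (Hseq ρ n) (Icc 0 1) (Icc 0 1) := by
  induction n with
  | zero => exact mapsTo_id _
  | succ n ih => exact ih.comp (mapsTo_Phi (h0 n) (h1 n))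

lemma continuousOn_Hseq (h0 : ∀ n i, 0 ≤ ρ n i) (h1 : ∀ n, HasSum (ρ n) 1) (n : ℕ) :
    ContinuousOn (Hseq ρ n) (Icc 0 1) := by
  induction n with
  | zero => exact continuousOn_id
  | succ n ih => exact ih.comp (continuousOn_Phi (h0 n) (h1 n)) (mapsTo_Phi (h0 n) (h1 n))

lemma one_sub_Hseq_le (h0 : ∀ n i, 0 ≤ ρ n i) (h1 : ∀ n, HasSum (ρ n) 1)
    {C : ℝ≥0∞} (hm : ∀ k, mom ρ k ≤ C) (hC : C ≠ ∞) (n : ℕ)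
    {z : ℝ} (hz : z ∈ Icc (0 : ℝ) 1) :
    1 - Hseq ρ n z ≤ C.toReal ^ n * (1 - z) := by
  induction n generalizing z with
  | zero => simp [Hseq]
  | succ n ih =>
    have hmn : (mom ρ n).toReal ≤ C.toReal := ENNReal.toReal_mono hC (hm n)
    calc 1 - Hseq ρ n (Phi ρ n z)
        ≤ C.toReal ^ n * (1 - Phi ρ n z) := ih (mapsTo_Phi (h0 n) (h1 n) hz)
      _ ≤ C.toReal ^ n * ((mom ρ n).toReal * (1 - z)) := by
        gcongr
        exact one_sub_Phi_le (h0 n) (h1 n) (ne_top_of_le_ne_top hC (hm n)) hz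
      _ ≤ C.toReal ^ (n + 1) * (1 - z) := by
        rw [pow_succ, mul_assoc]
        gcongr
        linarith [hz.2]

lemma tendsto_Hseq_zero_of_mom_le (h0 : ∀ n i, 0 ≤ ρ n i) (h1 : ∀ n, HasSum (ρ n) 1)
    {C : ℝ≥0∞} (hm : ∀ k, mom ρ k ≤ C) (hC : C < 1) :
    Tendsto (fun n => Hseq ρ n 0) atTop (𝓝[Icc 0 1] 1) := by
  have hC' : C.toReal < 1 := by
    simpa using ENNReal.toReal_strict_mono ENNReal.one_ne_top hC
  have hlow : Tendsto (fun n => 1 - C.toReal ^ n) atTop (𝓝 1) := by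
    simpa using tendsto_const_nhds.sub
      (tendsto_pow_atTop_nhds_zero_of_lt_one ENNReal.toReal_nonneg hC')
  have hmem (n : ℕ) := mapsTo_Hseq h0 h1 n ⟨le_rfl, zero_le_one⟩
  refine tendsto_nhdsWithin_iff.2 ⟨tendsto_of_tendsto_of_tendsto_of_le_of_le hlow
    tendsto_const_nhds (fun n => ?_) (fun n => (hmem n).2), Eventually.of_forall hmem⟩
  have := one_sub_Hseq_le h0 h1 hm hC.ne_top n ⟨le_rfl, zero_le_one⟩
  linarith

end Iteration

theorem bpve_extinction_of_limsup_mean_lt_one_general (ρ : ℕ → ℕ → ℝ)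
    (hρ0 : ∀ n i, 0 ≤ ρ n i) (hρ1 : ∀ n, HasSum (ρ n) 1)
    (hlim : limsup (mom ρ) atTop < 1)
    (pe : ℝ) (hpe : Tendsto (fun n => Hseq ρ n 0) atTop (nhds pe)) :
    pe = 1 := by
  obtain ⟨C, hlimC, hC1⟩ := exists_between hlim
  obtain ⟨N, hN⟩ := eventually_atTop.mp (eventually_lt_of_limsup_lt hlimC)
  have htail : Tendsto (fun n => Hseq (fun k => ρ (N + k)) n 0) atTop (𝓝[Icc 0 1] 1) :=
    tendsto_Hseq_zero_of_mom_le (fun n => hρ0 _) (fun n => hρ1 _)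
      (fun k => (hN (N + k) le_self_add).le) hC1
  have hshift : Tendsto (fun n => Hseq ρ (N + n) 0) atTop (𝓝 1) := by
    simp_rw [Hseq_add N]
    rw [← Hseq_one hρ1 N]
    exact ((continuousOn_Hseq hρ0 hρ1 N) 1 ⟨zero_le_one, le_rfl⟩).tendsto.comp htail
  refine tendsto_nhds_unique ?_ hshift
  simpa only [Function.comp_def, add_comm _ N] using hpe.comp (tendsto_add_atTop_nat N)

/-- a BPVE with `limsup_n m_n < 1` dies out, i.e. `p_e = 1`. -/
theorem bpve_extinction_of_limsup_mean_lt_one (ρ : ℕ → ℕ → ℝ)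
    (hρ0 : ∀ n i, 0 ≤ ρ n i) (hρ1 : ∀ n, HasSum (ρ n) 1)
    (hρlt : ∀ n, ρ n 0 < 1)
    (hlim : limsup (mom ρ) atTop < 1)
    (pe : ℝ) (hpe : Tendsto (fun n => Hseq ρ n 0) atTop (nhds pe)) :
    pe = 1 :=
  bpve_extinction_of_limsup_mean_lt_one_general ρ hρ0 hρ1 hlim pe hpe
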